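/- arXiv:2305.03922 — 7 statements merged into one kernel-verified Lean document; each statement's English description precedes it below -/
import Mathlib

section
/- If a sequence (uᵏ) in ℝⁿ is quasi-Fejér convergent to a nonempty set U (i.e., for every u ∈ U there is a nonnegative summable sequence (εₖ) with ‖u^{k+1} - u‖² ≤ ‖uᵏ - u‖² + εₖ for all k), then (uᵏ) is bounded. -/
open Filter

theorem stmt_4 {n : ℕ} (u : ℕ → EuclideanSpace ℝ (Fin n)) (U : Set (EuclideanSpace ℝ (Fin n)))
    (hU : U.Nonempty)
    (hqf : ∀ v ∈ U, ∃ ε : ℕ → ℝ, (∀ k, 0 ≤ ε k) ∧ Summable ε ∧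
      ∀ k, ‖u (k+1) - v‖^2 ≤ ‖u k - v‖^2 + ε k) :
    ∃ C : ℝ, ∀ k, ‖u k‖ ≤ C := by
  obtain ⟨v, hv⟩ := hU
  obtain ⟨ε, hε0, hεs, hrec⟩ := hqf v hv
  have htsum : ∀ k, ∑ i ∈ Finset.range k, ε i ≤ ∑' i, ε i := fun k =>
    Summable.sum_le_tsum _ (fun i _ => hε0 i) hεs
  have key : ∀ k, ‖u k - v‖^2 ≤ ‖u 0 - v‖^2 + ∑ i ∈ Finset.range k, ε i := by
    intro k
    induction k with
    | zero => simp
    | succ k ih =>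
      calc ‖u (k+1) - v‖^2 ≤ ‖u k - v‖^2 + ε k := hrec k
        _ ≤ ‖u 0 - v‖^2 + ∑ i ∈ Finset.range k, ε i + ε k := by linarith
        _ = ‖u 0 - v‖^2 + ∑ i ∈ Finset.range (k+1), ε i := by
            rw [Finset.sum_range_succ]; ring
  refine ⟨Real.sqrt (‖u 0 - v‖^2 + ∑' i, ε i) + ‖v‖, fun k => ?_⟩
  have h1 : ‖u k - v‖^2 ≤ ‖u 0 - v‖^2 + ∑' i, ε i := (key k).trans (by linarith [htsum k])
  have h2 : ‖u k - v‖ ≤ Real.sqrt (‖u 0 - v‖^2 + ∑' i, ε i) := by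
    rw [show (2:ℕ) = 2 from rfl] at h1
    have := Real.sqrt_le_sqrt h1
    rwa [Real.sqrt_sq (norm_nonneg _)] at this
  calc ‖u k‖ = ‖(u k - v) + v‖ := by rw [sub_add_cancel]
    _ ≤ ‖u k - v‖ + ‖v‖ := norm_add_le _ _
    _ ≤ _ := by linarith
end

section
/- Let (uᵏ) in ℝⁿ be quasi-Fejér convergent to a nonempty set U ⊆ ℝⁿ. If some cluster point ū of (uᵏ) belongs to U, then the whole sequence converges to ū. -/
open Filter Topology

theorem stmt_5 {n : ℕ} (u : ℕ → EuclideanSpace ℝ (Fin n)) (U : Set (EuclideanSpace ℝ (Fin n)))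
    (hU : U.Nonempty)
    (hqf : ∀ v ∈ U, ∃ ε : ℕ → ℝ, (∀ k, 0 ≤ ε k) ∧ Summable ε ∧
      ∀ k, ‖u (k+1) - v‖^2 ≤ ‖u k - v‖^2 + ε k)
    (ubar : EuclideanSpace ℝ (Fin n)) (hmem : ubar ∈ U)
    (φ : ℕ → ℕ) (hφ : StrictMono φ) (hconv : Tendsto (u ∘ φ) atTop (𝓝 ubar)) :
    Tendsto u atTop (𝓝 ubar) := by
  obtain ⟨ε, hε0, hεsum, hstep⟩ := hqf ubar hmem
  set a : ℕ → ℝ := fun k => ‖u k - ubar‖^2 with ha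
  have ha0 : ∀ k, 0 ≤ a k := fun k => sq_nonneg _
  set S : ℕ → ℝ := fun k => ∑ j ∈ Finset.range k, ε j with hS
  have hScauchy : CauchySeq S := (hεsum.hasSum.tendsto_sum_nat).cauchySeq
  have key : ∀ m k, m ≤ k → a k ≤ a m + (S k - S m) := by
    intro m k hmk
    induction k, hmk using Nat.le_induction with
    | base => simp
    | succ k hmk ih =>
        have h1 : a (k+1) ≤ a k + ε k := hstep k
        have h2 : S (k+1) = S k + ε k := by
          simp [hS, Finset.sum_range_succ]
        linarith
  -- subsequence of a tends to 0
  have hconv_a : Tendsto (fun i => a (φ i)) atTop (𝓝 0) := by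
    have h1 : Tendsto (fun i => ‖(u ∘ φ) i - ubar‖) atTop (𝓝 0) := by
      rw [← tendsto_iff_norm_sub_tendsto_zero]
      exact hconv
    have := h1.pow 2
    simpa using this
  have haz : Tendsto a atTop (𝓝 0) := by
    rw [Metric.tendsto_atTop]
    intro δ hδ
    rw [Metric.cauchySeq_iff] at hScauchy
    obtain ⟨N, hN⟩ := hScauchy (δ/2) (by linarith)
    rw [Metric.tendsto_atTop] at hconv_a
    obtain ⟨K, hK⟩ := hconv_a (δ/2) (by linarith)
    set i := max K N with hi
    have hφi : N ≤ φ i := le_trans (le_max_right K N) (hφ.le_apply)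
    refine ⟨φ i, fun k hk => ?_⟩
    have h1 : a (φ i) < δ/2 := by
      have := hK i (le_max_left K N)
      rwa [Real.dist_eq, sub_zero, abs_of_nonneg (ha0 (φ i))] at this
    have h2 : S k - S (φ i) < δ/2 := by
      have := hN k (le_trans hφi hk) (φ i) hφi
      rw [Real.dist_eq] at this
      exact lt_of_le_of_lt (le_abs_self _) this
    have h3 := key (φ i) k hk
    rw [Real.dist_eq, sub_zero, abs_of_nonneg (ha0 k)]
    linarith
  -- conclude
  rw [tendsto_iff_norm_sub_tendsto_zero]
  have hsq : Tendsto (fun k => Real.sqrt (a k)) atTop (𝓝 0) := by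
    have := (Real.continuous_sqrt.tendsto 0).comp haz
    simpa [Function.comp_def] using this
  refine hsq.congr fun k => ?_
  simp [ha, Real.sqrt_sq (norm_nonneg _)]
end

section
/- Let θ: ℝⁿ → ℝ be convex, X ⊆ ℝⁿ closed convex, A ∈ ℝ^{m×n}, b ∈ ℝᵐ, β > 0, Q symmetric positive definite, and let Λ = ℝᵐ. Suppose (x^{k+1}, λ^{k+1}) is generated from (xᵏ, λᵏ) by the penalty dual-primal ALM: λ^{k+1} = λᵏ - β(Axᵏ - b), and x^{k+1} minimizes θ(x) - ⟨2λ^{k+1} - λᵏ, Ax - b⟩ + (β/2)‖A(x - xᵏ)‖² + (1/2)‖x - xᵏ‖_Q² over X. Then with ω = (x, λ), F(ω) = (-Aᵀλ, Ax - b), and H = [[βAᵀA + Q, -Aᵀ], [-A, (1/β)I]], one has: for all ω ∈ X × Λ, θ(x) - θ(x^{k+1}) + (ω - ω^{k+1})ᵀF(ω^{k+1}) ≥ (ω - ω^{k+1})ᵀH(ωᵏ - ω^{k+1}). -/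
open Matrix

private lemma limit_lemma {c R : ℝ} (h : ∀ t : ℝ, 0 < t → t ≤ 1 → 0 ≤ c + t * R) : 0 ≤ c := by
  by_contra hc
  push_neg at hc
  have hR : (0:ℝ) < |R| + 1 := by positivity
  have ht0 : 0 < min 1 (-c / (|R| + 1)) := lt_min one_pos (div_pos (neg_pos.2 hc) hR)
  have h2 := h _ ht0 (min_le_left _ _)
  have h3 : min 1 (-c / (|R| + 1)) * R ≤ min 1 (-c / (|R| + 1)) * |R| :=
    mul_le_mul_of_nonneg_left (le_abs_self R) ht0.le
  have h4 : min 1 (-c / (|R| + 1)) * (|R| + 1) ≤ -c / (|R| + 1) * (|R| + 1) :=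
    mul_le_mul_of_nonneg_right (min_le_right _ _) hR.le
  have h5 : -c / (|R| + 1) * (|R| + 1) = -c := by field_simp
  nlinarith

theorem stmt_7 {m n : ℕ} (θ : (Fin n → ℝ) → ℝ) (hθ : ConvexOn ℝ Set.univ θ)
    (X : Set (Fin n → ℝ)) (hXc : IsClosed X) (hXv : Convex ℝ X)
    (A : Matrix (Fin m) (Fin n) ℝ) (b : Fin m → ℝ) (β : ℝ) (hβ : 0 < β)
    (Q : Matrix (Fin n) (Fin n) ℝ) (hQ : Q.PosDef)
    (x0 x1 : Fin n → ℝ) (l0 l1 : Fin m → ℝ)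
    (hdual : l1 = l0 - β • (A.mulVec x0 - b))
    (hx1 : x1 ∈ X ∧ ∀ x ∈ X,
      θ x1 - (2 • l1 - l0) ⬝ᵥ (A.mulVec x1 - b)
        + β / 2 * (A.mulVec (x1 - x0) ⬝ᵥ A.mulVec (x1 - x0))
        + 1 / 2 * ((x1 - x0) ⬝ᵥ Q.mulVec (x1 - x0))
      ≤ θ x - (2 • l1 - l0) ⬝ᵥ (A.mulVec x - b)
        + β / 2 * (A.mulVec (x - x0) ⬝ᵥ A.mulVec (x - x0))
        + 1 / 2 * ((x - x0) ⬝ᵥ Q.mulVec (x - x0))) :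
    ∀ x ∈ X, ∀ l : Fin m → ℝ,
      θ x - θ x1
        + (Sum.elim x l - Sum.elim x1 l1) ⬝ᵥ
            Sum.elim (-(Aᵀ.mulVec l1)) (A.mulVec x1 - b)
      ≥ (Sum.elim x l - Sum.elim x1 l1) ⬝ᵥ
          (Matrix.fromBlocks (β • (Aᵀ * A) + Q) (-Aᵀ) (-A)
            (β⁻¹ • (1 : Matrix (Fin m) (Fin m) ℝ))).mulVec
            (Sum.elim x0 l0 - Sum.elim x1 l1) := by
  obtain ⟨hx1X, hmin⟩ := hx1
  intro x hx l
  have hβ' : β ≠ 0 := ne_of_gt hβ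
  set w : Fin n → ℝ := x - x1 with hw
  set u : Fin n → ℝ := x1 - x0 with hu
  set μ : Fin m → ℝ := 2 • l1 - l0 with hμ
  have hdl : l0 - l1 = β • (A.mulVec x0 - b) := by
    rw [hdual]; abel
  -- symmetry facts
  have hQt : Qᵀ = Q := hQ.isHermitian
  have hAt : ∀ (a : Fin n → ℝ) (v : Fin m → ℝ),
      a ⬝ᵥ Aᵀ.mulVec v = A.mulVec a ⬝ᵥ v := by
    intro a v
    rw [dotProduct_mulVec, vecMul_transpose]
  have hsymQ : ∀ a c : Fin n → ℝ, a ⬝ᵥ Q.mulVec c = c ⬝ᵥ Q.mulVec a := by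
    intro a c
    nth_rewrite 1 [← hQt]
    rw [dotProduct_mulVec, vecMul_transpose, dotProduct_comm]
  set c : ℝ := θ x - θ x1 - μ ⬝ᵥ A.mulVec w + β * (A.mulVec u ⬝ᵥ A.mulVec w)
      + w ⬝ᵥ Q.mulVec u with hc
  set R : ℝ := β / 2 * (A.mulVec w ⬝ᵥ A.mulVec w) + 1 / 2 * (w ⬝ᵥ Q.mulVec w) with hR
  have key : 0 ≤ c := by
    apply limit_lemma (R := R)
    intro t ht0 ht1
    have heq : (1 - t) • x1 + t • x = x1 + t • w := by
      funext i
      simp [hw, Pi.smul_apply, smul_eq_mul]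
      ring
    have hxt : x1 + t • w ∈ X := by
      have h := hXv hx1X hx (by linarith : (0:ℝ) ≤ 1 - t) ht0.le (by ring)
      rwa [heq] at h
    have hm := hmin _ hxt
    have hconv := hθ.2 (Set.mem_univ x1) (Set.mem_univ x)
      (by linarith : (0:ℝ) ≤ 1 - t) ht0.le (by ring)
    rw [heq] at hconv
    have e1 : x1 + t • w - x0 = u + t • w := by
      funext i; simp [hu, hw]; ring
    have e2 : A.mulVec (x1 + t • w) = A.mulVec x1 + t • A.mulVec w := by
      rw [Matrix.mulVec_add, Matrix.mulVec_smul]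
    have e3 : A.mulVec (u + t • w) = A.mulVec u + t • A.mulVec w := by
      rw [Matrix.mulVec_add, Matrix.mulVec_smul]
    have e4 : Q.mulVec (u + t • w) = Q.mulVec u + t • Q.mulVec w := by
      rw [Matrix.mulVec_add, Matrix.mulVec_smul]
    rw [e1, e2, e3, e4] at hm
    simp only [dotProduct_add, add_dotProduct, dotProduct_sub, sub_dotProduct,
      dotProduct_smul, smul_dotProduct, smul_eq_mul] at hm
    simp only [smul_eq_mul] at hconv
    have cm1 : A.mulVec w ⬝ᵥ A.mulVec u = A.mulVec u ⬝ᵥ A.mulVec w := dotProduct_comm _ _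
    have cm2 : u ⬝ᵥ Q.mulVec w = w ⬝ᵥ Q.mulVec u := hsymQ u w
    rw [cm1, cm2] at hm
    rw [hc, hR]
    nlinarith [hm, hconv, ht0]
  -- final algebra
  have es1 : Sum.elim x l - Sum.elim x1 l1 = Sum.elim w (l - l1) := by
    funext i; cases i <;> rfl
  have es2 : Sum.elim x0 l0 - Sum.elim x1 l1 = Sum.elim (x0 - x1) (l0 - l1) := by
    funext i; cases i <;> rfl
  rw [es1, es2, fromBlocks_mulVec, sumElim_dotProduct_sumElim,
    sumElim_dotProduct_sumElim]
  simp only [Sum.elim_comp_inl, Sum.elim_comp_inr]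
  -- lambda part equality
  have elam : (-A).mulVec (x0 - x1) + (β⁻¹ • (1 : Matrix (Fin m) (Fin m) ℝ)).mulVec (l0 - l1)
      = A.mulVec x1 - b := by
    rw [hdl, Matrix.neg_mulVec, Matrix.mulVec_sub, smul_mulVec, one_mulVec,
      smul_smul, inv_mul_cancel₀ hβ', one_smul]
    funext i
    simp [Matrix.mulVec_sub]
  rw [elam]
  -- x part
  have ex : w ⬝ᵥ ((β • (Aᵀ * A) + Q).mulVec (x0 - x1) + (-Aᵀ).mulVec (l0 - l1))
      = -(β * (A.mulVec u ⬝ᵥ A.mulVec w)) - w ⬝ᵥ Q.mulVec u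
        - (A.mulVec w ⬝ᵥ l0 - A.mulVec w ⬝ᵥ l1) := by
    have hx01 : x0 - x1 = -u := by rw [hu]; abel
    rw [hx01, Matrix.add_mulVec, Matrix.mulVec_neg, Matrix.mulVec_neg,
      Matrix.neg_mulVec, smul_mulVec, ← Matrix.mulVec_mulVec]
    simp only [dotProduct_add, dotProduct_neg, dotProduct_smul, smul_eq_mul]
    rw [hAt w (A.mulVec u), hAt w (l0 - l1), dotProduct_comm (A.mulVec u) (A.mulVec w)]
    simp only [dotProduct_sub]
    ring_nf
  rw [ex]
  have eμ : μ ⬝ᵥ A.mulVec w = 2 * (l1 ⬝ᵥ A.mulVec w) - l0 ⬝ᵥ A.mulVec w := by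
    rw [hμ, sub_dotProduct, two_smul, add_dotProduct]
    ring
  have ew : w ⬝ᵥ (-(Aᵀ.mulVec l1)) = -(A.mulVec w ⬝ᵥ l1) := by
    rw [dotProduct_neg, hAt]
  rw [ew]
  have d1 : l1 ⬝ᵥ A.mulVec w = A.mulVec w ⬝ᵥ l1 := dotProduct_comm _ _
  have d2 : l0 ⬝ᵥ A.mulVec w = A.mulVec w ⬝ᵥ l0 := dotProduct_comm _ _
  rw [hc, eμ, d1, d2] at key
  linarith [key]
end

section
/- Under the setting of the penalty dual-primal ALM, if the variational-inequality characterization θ(x) - θ(x^{k+1}) + (ω - ω^{k+1})ᵀF(ω^{k+1}) ≥ (ω - ω^{k+1})ᵀH(ωᵏ - ω^{k+1}) holds for all ω ∈ Ω, where F is affine with skew-symmetric linear part and H is symmetric, then for all ω ∈ Ω: θ(x) - θ(x^{k+1}) + (ω - ω^{k+1})ᵀF(ω) ≥ ½(‖ω - ω^{k+1}‖_H² - ‖ω - ωᵏ‖_H²) + ½(‖ωᵏ - ω^{k+1}‖_H²). -/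
open Matrix

theorem stmt_8 {m n : ℕ} (θ : (Fin n → ℝ) → ℝ) (hθ : ConvexOn ℝ Set.univ θ)
    (Ω : Set (Fin n ⊕ Fin m → ℝ)) (hΩ : Convex ℝ Ω)
    (A : Matrix (Fin m) (Fin n) ℝ) (b : Fin m → ℝ)
    (F : (Fin n ⊕ Fin m → ℝ) → (Fin n ⊕ Fin m → ℝ))
    (hF : ∀ w, F w = Sum.elim (-(Aᵀ.mulVec (w ∘ Sum.inr))) (A.mulVec (w ∘ Sum.inl) - b))
    (H : Matrix (Fin n ⊕ Fin m) (Fin n ⊕ Fin m) ℝ) (hH : H.IsSymm)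
    (ω0 ω1 : Fin n ⊕ Fin m → ℝ) (hω1 : ω1 ∈ Ω)
    (hvi : ∀ ω ∈ Ω, θ (ω ∘ Sum.inl) - θ (ω1 ∘ Sum.inl) + (ω - ω1) ⬝ᵥ F ω1
            ≥ (ω - ω1) ⬝ᵥ H.mulVec (ω0 - ω1)) :
    ∀ ω ∈ Ω, θ (ω ∘ Sum.inl) - θ (ω1 ∘ Sum.inl) + (ω - ω1) ⬝ᵥ F ω
      ≥ (1/2) * ((ω - ω1) ⬝ᵥ H.mulVec (ω - ω1) - (ω - ω0) ⬝ᵥ H.mulVec (ω - ω0))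
        + (1/2) * ((ω0 - ω1) ⬝ᵥ H.mulVec (ω0 - ω1)) := by
  -- symmetry of the bilinear form
  have hsym : ∀ x y : Fin n ⊕ Fin m → ℝ, x ⬝ᵥ H.mulVec y = y ⬝ᵥ H.mulVec x := by
    intro x y
    rw [dotProduct_mulVec, ← mulVec_transpose, hH.eq, dotProduct_comm]
  -- skew: the cross term vanishes
  have hskew : ∀ ω : Fin n ⊕ Fin m → ℝ, (ω - ω1) ⬝ᵥ F ω = (ω - ω1) ⬝ᵥ F ω1 := by
    intro ω
    have key0 : (ω - ω1) ⬝ᵥ (F ω - F ω1) = 0 := by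
      rw [hF, hF]
      have hdiff : (Sum.elim (-(Aᵀ.mulVec (ω ∘ Sum.inr))) (A.mulVec (ω ∘ Sum.inl) - b) -
          Sum.elim (-(Aᵀ.mulVec (ω1 ∘ Sum.inr))) (A.mulVec (ω1 ∘ Sum.inl) - b)) =
          Sum.elim (-(Aᵀ.mulVec ((ω - ω1) ∘ Sum.inr))) (A.mulVec ((ω - ω1) ∘ Sum.inl)) := by
        funext i
        cases i with
        | inl i =>
          simp only [Pi.sub_apply, Sum.elim_inl, Pi.neg_apply, mulVec, dotProduct,
            Function.comp_apply, mul_sub, Finset.sum_sub_distrib]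
          ring
        | inr i =>
          simp only [Pi.sub_apply, Sum.elim_inr, Pi.neg_apply, mulVec, dotProduct,
            Function.comp_apply, mul_sub, Finset.sum_sub_distrib, Pi.sub_apply]
          ring
      rw [hdiff]
      have hd : ∀ (u : Fin n ⊕ Fin m → ℝ) (p : Fin n → ℝ) (q : Fin m → ℝ),
          u ⬝ᵥ Sum.elim p q = (u ∘ Sum.inl) ⬝ᵥ p + (u ∘ Sum.inr) ⬝ᵥ q := by
        intro u p q
        simp [dotProduct, Fintype.sum_sum_type]
      rw [hd]
      have e1 : ((ω - ω1) ∘ Sum.inl) ⬝ᵥ (Aᵀ.mulVec ((ω - ω1) ∘ Sum.inr))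
          = ((ω - ω1) ∘ Sum.inr) ⬝ᵥ (A.mulVec ((ω - ω1) ∘ Sum.inl)) := by
        rw [dotProduct_mulVec, vecMul_transpose, dotProduct_comm]
      rw [dotProduct_neg, e1]
      ring
    have h2 := dotProduct_sub (ω - ω1) (F ω) (F ω1)
    rw [h2] at key0
    linarith
  intro ω hω
  have h1 := hvi ω hω
  rw [hskew ω]
  -- algebraic identity for the RHS
  have key : (ω - ω1) ⬝ᵥ H.mulVec (ω0 - ω1)
      = (1/2) * ((ω - ω1) ⬝ᵥ H.mulVec (ω - ω1) - (ω - ω0) ⬝ᵥ H.mulVec (ω - ω0))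
        + (1/2) * ((ω0 - ω1) ⬝ᵥ H.mulVec (ω0 - ω1)) := by
    have e : ω - ω0 = (ω - ω1) - (ω0 - ω1) := by ring_nf
    rw [e]
    have h2 : ((ω - ω1) - (ω0 - ω1)) ⬝ᵥ H.mulVec ((ω - ω1) - (ω0 - ω1))
        = (ω - ω1) ⬝ᵥ H.mulVec (ω - ω1) - (ω - ω1) ⬝ᵥ H.mulVec (ω0 - ω1)
          - ((ω0 - ω1) ⬝ᵥ H.mulVec (ω - ω1) - (ω0 - ω1) ⬝ᵥ H.mulVec (ω0 - ω1)) := by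
      rw [mulVec_sub, sub_dotProduct, dotProduct_sub, dotProduct_sub]
    rw [h2, hsym (ω0 - ω1) (ω - ω1)]
    ring
  linarith
end

section
/- Ergodic convergence rate: suppose for each k ≥ 0 and all ω ∈ Ω, θ(x) - θ(x^{k+1}) + (ω - ω^{k+1})ᵀF(ω) + ½‖ω - ωᵏ‖_H² ≥ ½‖ω - ω^{k+1}‖_H², where θ is convex and F affine with skew-symmetric part, and H symmetric positive semidefinite. Define ω̃_t = (1/(t+1)) Σ_{k=0}^{t} ω^{k+1}. Then for all ω ∈ Ω: θ(x̃_t) - θ(x) + (ω̃_t - ω)ᵀF(ω) ≤ (1/(2(t+1)))‖ω - ω⁰‖_H². -/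
open Matrix Finset

theorem stmt_12 {m n : ℕ} (θ : (Fin n → ℝ) → ℝ) (hθ : ConvexOn ℝ Set.univ θ)
    (Ω : Set (Fin n ⊕ Fin m → ℝ)) (hΩ : Convex ℝ Ω)
    (A : Matrix (Fin m) (Fin n) ℝ) (b : Fin m → ℝ)
    (F : (Fin n ⊕ Fin m → ℝ) → (Fin n ⊕ Fin m → ℝ))
    (hF : ∀ w, F w = Sum.elim (-(Aᵀ.mulVec (w ∘ Sum.inr))) (A.mulVec (w ∘ Sum.inl) - b))
    (H : Matrix (Fin n ⊕ Fin m) (Fin n ⊕ Fin m) ℝ) (hH : H.PosSemidef)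
    (ω : ℕ → (Fin n ⊕ Fin m → ℝ)) (hωΩ : ∀ k, ω k ∈ Ω)
    (hineq : ∀ k : ℕ, ∀ w ∈ Ω,
      θ (w ∘ Sum.inl) - θ ((ω (k+1)) ∘ Sum.inl) + (w - ω (k+1)) ⬝ᵥ F w
          + (1/2) * ((w - ω k) ⬝ᵥ H.mulVec (w - ω k))
        ≥ (1/2) * ((w - ω (k+1)) ⬝ᵥ H.mulVec (w - ω (k+1))))
    (t : ℕ)
    (ωt : Fin n ⊕ Fin m → ℝ)
    (hωt : ωt = ((t : ℝ) + 1)⁻¹ • ∑ k ∈ Finset.range (t+1), ω (k+1)) :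
    ∀ w ∈ Ω, θ (ωt ∘ Sum.inl) - θ (w ∘ Sum.inl) + (ωt - w) ⬝ᵥ F w
      ≤ (1 / (2 * ((t : ℝ) + 1))) * ((w - ω 0) ⬝ᵥ H.mulVec (w - ω 0)) := by
  intro w hw
  have hN : (0:ℝ) < (t:ℝ) + 1 := by positivity
  -- telescoping sum
  have key : (1/2) * ((w - ω (t+1)) ⬝ᵥ H.mulVec (w - ω (t+1)))
      - (1/2) * ((w - ω 0) ⬝ᵥ H.mulVec (w - ω 0))
      ≤ ∑ k ∈ Finset.range (t+1),
        (θ (w ∘ Sum.inl) - θ ((ω (k+1)) ∘ Sum.inl) + (w - ω (k+1)) ⬝ᵥ F w) := by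
    rw [← Finset.sum_range_sub (fun k => (1/2) * ((w - ω k) ⬝ᵥ H.mulVec (w - ω k))) (t+1)]
    apply Finset.sum_le_sum
    intro k _
    have := hineq k w hw
    linarith
  have hnn : 0 ≤ (w - ω (t+1)) ⬝ᵥ H.mulVec (w - ω (t+1)) := by
    have := hH.dotProduct_mulVec_nonneg (w - ω (t+1))
    simpa using this
  have hmain : ∑ k ∈ Finset.range (t+1), θ ((ω (k+1)) ∘ Sum.inl)
      - ((t:ℝ)+1) * θ (w ∘ Sum.inl)
      - ∑ k ∈ Finset.range (t+1), (w - ω (k+1)) ⬝ᵥ F w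
      ≤ (1/2) * ((w - ω 0) ⬝ᵥ H.mulVec (w - ω 0)) := by
    have hexp : ∑ k ∈ Finset.range (t+1),
        (θ (w ∘ Sum.inl) - θ ((ω (k+1)) ∘ Sum.inl) + (w - ω (k+1)) ⬝ᵥ F w)
        = ((t:ℝ)+1) * θ (w ∘ Sum.inl)
          - ∑ k ∈ Finset.range (t+1), θ ((ω (k+1)) ∘ Sum.inl)
          + ∑ k ∈ Finset.range (t+1), (w - ω (k+1)) ⬝ᵥ F w := by
      rw [Finset.sum_add_distrib, Finset.sum_sub_distrib, Finset.sum_const,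
        Finset.card_range]
      push_cast
      ring
    rw [hexp] at key
    linarith
  -- Jensen
  have hcomp : ωt ∘ Sum.inl
      = ∑ k ∈ Finset.range (t+1), ((t:ℝ)+1)⁻¹ • ((ω (k+1)) ∘ Sum.inl) := by
    ext i
    simp [hωt, Finset.sum_apply, Finset.mul_sum]
  have hjensen : θ (ωt ∘ Sum.inl)
      ≤ ∑ k ∈ Finset.range (t+1), ((t:ℝ)+1)⁻¹ * θ ((ω (k+1)) ∘ Sum.inl) := by
    rw [hcomp]
    apply hθ.map_sum_le (fun i _ => by positivity)
    · rw [Finset.sum_const, Finset.card_range]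
      rw [nsmul_eq_mul]
      push_cast
      field_simp
    · intro i _
      exact Set.mem_univ _
  rw [← Finset.mul_sum] at hjensen
  -- dot product linearity
  have hdiff : ωt - w = ((t:ℝ)+1)⁻¹ • ∑ k ∈ Finset.range (t+1), (ω (k+1) - w) := by
    ext i
    simp only [hωt, Pi.sub_apply, Pi.smul_apply, Finset.sum_apply, smul_eq_mul,
      Finset.sum_sub_distrib, mul_sub, Finset.sum_const, Finset.card_range,
      nsmul_eq_mul]
    push_cast
    field_simp
    simp [Pi.mul_apply]
  have hsd : ∀ (s : Finset ℕ) (f : ℕ → (Fin n ⊕ Fin m → ℝ)),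
      (∑ k ∈ s, f k) ⬝ᵥ F w = ∑ k ∈ s, f k ⬝ᵥ F w := by
    intro s f
    induction s using Finset.cons_induction with
    | empty => simp
    | cons a s ha ih => simp [Finset.sum_insert ha, add_dotProduct, ih]
  have hdot : (ωt - w) ⬝ᵥ F w
      = -(((t:ℝ)+1)⁻¹ * ∑ k ∈ Finset.range (t+1), (w - ω (k+1)) ⬝ᵥ F w) := by
    rw [hdiff, smul_dotProduct, hsd]
    have hneg : ∀ k, (ω (k+1) - w) ⬝ᵥ F w = -((w - ω (k+1)) ⬝ᵥ F w) := fun k => by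
      rw [← neg_dotProduct, neg_sub]
    simp only [hneg, Finset.sum_neg_distrib, smul_eq_mul, mul_neg]
  rw [hdot]
  have h2 := mul_le_mul_of_nonneg_left hmain (inv_nonneg.mpr hN.le)
  rw [mul_sub, mul_sub, ← mul_assoc, inv_mul_cancel₀ hN.ne', one_mul] at h2
  have hr : (1:ℝ) / (2 * ((t:ℝ)+1)) = ((t:ℝ)+1)⁻¹ * (1/2) := by
    rw [one_div, mul_inv, one_div, mul_comm]
  rw [hr, mul_assoc]
  linarith
end

section
/- Let A_i ∈ ℝ^{m×n_i}, β_i > 0, and Q_i ∈ ℝ^{n_i×n_i} symmetric positive definite for i = 1,…,p. Then the block matrix H with diagonal blocks β_i A_iᵀA_i + Q_i (i = 1,…,p) and Σ_{i=1}^p (1/β_i) I_m, off-diagonal last row/column blocks -A_i and -A_iᵀ, and zero elsewhere, is symmetric positive definite; indeed ωᵀHω = Σ_{i=1}^p ‖(1/√β_i)λ - √β_i A_i x_i‖² + Σ_{i=1}^p ‖x_i‖_{Q_i}² for ω = (x_1,…,x_p,λ). -/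
open Matrix

private lemma key_scalar {m k : ℕ} (A : Matrix (Fin m) (Fin k) ℝ) (b : ℝ) (hb : 0 < b)
    (x : Fin k → ℝ) (l : Fin m → ℝ) :
    x ⬝ᵥ (b • (Aᵀ * A)).mulVec x + x ⬝ᵥ (-Aᵀ).mulVec l + l ⬝ᵥ (-A).mulVec x
      + b⁻¹ * (l ⬝ᵥ l)
    = ((Real.sqrt b)⁻¹ • l - Real.sqrt b • A.mulVec x) ⬝ᵥ
      ((Real.sqrt b)⁻¹ • l - Real.sqrt b • A.mulVec x) := by
  have h1 : x ⬝ᵥ (Aᵀ * A).mulVec x = A.mulVec x ⬝ᵥ A.mulVec x := by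
    rw [← mulVec_mulVec, dotProduct_mulVec, vecMul_transpose]
  have h2 : x ⬝ᵥ Aᵀ.mulVec l = A.mulVec x ⬝ᵥ l := by
    rw [dotProduct_mulVec, vecMul_transpose]
  simp only [sub_dotProduct, dotProduct_sub, smul_dotProduct, dotProduct_smul,
    neg_mulVec, dotProduct_neg, neg_dotProduct, smul_mulVec, smul_eq_mul]
  rw [h1, h2, dotProduct_comm l (A.mulVec x)]
  field_simp
  ring_nf
  rw [Real.sq_sqrt hb.le]
  rw [show Real.sqrt b ^ 4 = (Real.sqrt b ^ 2) ^ 2 by ring, Real.sq_sqrt hb.le]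
  ring

private lemma dot_self_nonneg {k : ℕ} (v : Fin k → ℝ) : 0 ≤ v ⬝ᵥ v :=
  Finset.sum_nonneg fun _ _ => mul_self_nonneg _

private lemma dot_self_pos {k : ℕ} {v : Fin k → ℝ} (hv : v ≠ 0) : 0 < v ⬝ᵥ v :=
  lt_of_le_of_ne (dot_self_nonneg v) fun h => hv (dotProduct_self_eq_zero.mp h.symm)

theorem stmt_13 {m p : ℕ} (hp : 1 ≤ p) (n : Fin p → ℕ)
    (A : (i : Fin p) → Matrix (Fin m) (Fin (n i)) ℝ)
    (β : Fin p → ℝ) (hβ : ∀ i, 0 < β i)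
    (Q : (i : Fin p) → Matrix (Fin (n i)) (Fin (n i)) ℝ) (hQ : ∀ i, (Q i).PosDef)
    (H : Matrix ((Σ i : Fin p, Fin (n i)) ⊕ Fin m) ((Σ i : Fin p, Fin (n i)) ⊕ Fin m) ℝ)
    (hH : H = Matrix.of fun r c =>
      match r, c with
      | Sum.inl ⟨i, a⟩, Sum.inl ⟨j, c'⟩ =>
          if h : i = j then
            (β i • ((A i)ᵀ * A i) + Q i) a (Fin.cast (congrArg n h.symm) c')
          else 0
      | Sum.inl ⟨i, a⟩, Sum.inr s => (-(A i)ᵀ) a s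
      | Sum.inr s, Sum.inl ⟨j, c'⟩ => (-(A j)) s c'
      | Sum.inr s, Sum.inr t => ((∑ i, (β i)⁻¹) • (1 : Matrix (Fin m) (Fin m) ℝ)) s t) :
    H.PosDef ∧
    ∀ ω : ((Σ i : Fin p, Fin (n i)) ⊕ Fin m) → ℝ,
      ω ⬝ᵥ H.mulVec ω
        = (∑ i : Fin p,
            (((Real.sqrt (β i))⁻¹ • (fun s => ω (Sum.inr s))
                - Real.sqrt (β i) • (A i).mulVec (fun a => ω (Sum.inl ⟨i, a⟩))) ⬝ᵥ
             ((Real.sqrt (β i))⁻¹ • (fun s => ω (Sum.inr s))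
                - Real.sqrt (β i) • (A i).mulVec (fun a => ω (Sum.inl ⟨i, a⟩)))))
          + ∑ i : Fin p,
              (fun a => ω (Sum.inl ⟨i, a⟩)) ⬝ᵥ (Q i).mulVec (fun a => ω (Sum.inl ⟨i, a⟩)) := by
  subst hH
  -- Step 1: block decomposition of the quadratic form
  have decomp : ∀ ω : ((Σ i : Fin p, Fin (n i)) ⊕ Fin m) → ℝ,
      ω ⬝ᵥ (Matrix.of fun r c =>
        match r, c with
        | Sum.inl ⟨i, a⟩, Sum.inl ⟨j, c'⟩ =>
            if h : i = j then
              (β i • ((A i)ᵀ * A i) + Q i) a (Fin.cast (congrArg n h.symm) c')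
            else 0
        | Sum.inl ⟨i, a⟩, Sum.inr s => (-(A i)ᵀ) a s
        | Sum.inr s, Sum.inl ⟨j, c'⟩ => (-(A j)) s c'
        | Sum.inr s, Sum.inr t =>
            ((∑ i, (β i)⁻¹) • (1 : Matrix (Fin m) (Fin m) ℝ)) s t : Matrix _ _ ℝ).mulVec ω
      = ∑ i, ((fun a => ω (Sum.inl ⟨i, a⟩)) ⬝ᵥ
              (β i • ((A i)ᵀ * A i) + Q i).mulVec (fun a => ω (Sum.inl ⟨i, a⟩))
          + (fun a => ω (Sum.inl ⟨i, a⟩)) ⬝ᵥ (-(A i)ᵀ).mulVec (fun s => ω (Sum.inr s))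
          + (fun s => ω (Sum.inr s)) ⬝ᵥ (-(A i)).mulVec (fun a => ω (Sum.inl ⟨i, a⟩))
          + (β i)⁻¹ * ((fun s => ω (Sum.inr s)) ⬝ᵥ (fun s => ω (Sum.inr s)))) := by
    intro ω
    have key1 : ∀ (i : Fin p) (a : Fin (n i)),
        (∑ j : Fin p, ∑ c : Fin (n j),
          (if h : i = j then (β i • ((A i)ᵀ * A i) + Q i) a (Fin.cast (congrArg n h.symm) c)
            else 0) * ω (Sum.inl ⟨j, c⟩))
        = ∑ c : Fin (n i), (β i • ((A i)ᵀ * A i) + Q i) a c * ω (Sum.inl ⟨i, c⟩) := by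
      intro i a
      rw [Finset.sum_eq_single_of_mem i (Finset.mem_univ i)]
      · refine Finset.sum_congr rfl fun c _ => ?_
        rw [dif_pos rfl]
        rfl
      · intro j _ hj
        exact Finset.sum_eq_zero fun c _ => by rw [dif_neg (fun h => hj h.symm)]; ring
    simp only [dotProduct, mulVec, Fintype.sum_sum_type, ← Finset.univ_sigma_univ,
      Finset.sum_sigma, of_apply, Matrix.smul_apply, one_apply, smul_eq_mul]
    simp only [key1, mul_ite, mul_one, mul_zero, ite_mul, zero_mul, Finset.sum_ite_eq,
      Finset.mem_univ, if_true]
    set X1 : Fin p → ℝ := fun i => ∑ a : Fin (n i), ω (Sum.inl ⟨i, a⟩) *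
        ∑ c : Fin (n i), (β i • ((A i)ᵀ * A i) + Q i) a c * ω (Sum.inl ⟨i, c⟩) with hX1
    set X2 : Fin p → ℝ := fun i => ∑ a : Fin (n i), ω (Sum.inl ⟨i, a⟩) *
        ∑ s : Fin m, (-(A i)ᵀ) a s * ω (Sum.inr s) with hX2
    set X3 : Fin p → ℝ := fun i => ∑ s : Fin m, ω (Sum.inr s) *
        ∑ c : Fin (n i), (-A i) s c * ω (Sum.inl ⟨i, c⟩) with hX3
    set X4 : Fin p → ℝ := fun i => (β i)⁻¹ * ∑ s : Fin m, ω (Sum.inr s) * ω (Sum.inr s) with hX4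
    have hL1 : (∑ i : Fin p, ∑ a : Fin (n i),
        ω (Sum.inl ⟨i, a⟩) *
          ((∑ c : Fin (n i), (β i • ((A i)ᵀ * A i) + Q i) a c * ω (Sum.inl ⟨i, c⟩)) +
            ∑ s : Fin m, (-(A i)ᵀ) a s * ω (Sum.inr s)))
        = ∑ i, (X1 i + X2 i) := by
      refine Finset.sum_congr rfl fun i _ => ?_
      rw [hX1, hX2, ← Finset.sum_add_distrib]
      exact Finset.sum_congr rfl fun a _ => mul_add _ _ _
    have hL2 : (∑ s : Fin m,
        ω (Sum.inr s) *
          ((∑ i : Fin p, ∑ c : Fin (n i), (-A i) s c * ω (Sum.inl ⟨i, c⟩)) +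
            (∑ i : Fin p, (β i)⁻¹) * ω (Sum.inr s)))
        = ∑ i, X3 i + ∑ i, X4 i := by
      have step : ∀ s : Fin m,
          ω (Sum.inr s) *
            ((∑ i : Fin p, ∑ c : Fin (n i), (-A i) s c * ω (Sum.inl ⟨i, c⟩)) +
              (∑ i : Fin p, (β i)⁻¹) * ω (Sum.inr s))
          = (∑ i : Fin p, ω (Sum.inr s) * ∑ c : Fin (n i), (-A i) s c * ω (Sum.inl ⟨i, c⟩))
            + ∑ i : Fin p, (β i)⁻¹ * (ω (Sum.inr s) * ω (Sum.inr s)) := by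
        intro s
        rw [mul_add, Finset.mul_sum, Finset.sum_mul, Finset.mul_sum]
        congr 1
        exact Finset.sum_congr rfl fun i _ => by ring
      simp only [step]
      rw [Finset.sum_add_distrib, Finset.sum_comm, hX3]
      congr 1
      rw [Finset.sum_comm, hX4]
      exact Finset.sum_congr rfl fun i _ => (Finset.mul_sum _ _ _).symm
    rw [hL1, hL2]
    simp only [Finset.sum_add_distrib]
    ring
  -- Step 2: the quadratic form identity
  have quad : ∀ ω : ((Σ i : Fin p, Fin (n i)) ⊕ Fin m) → ℝ,
      ω ⬝ᵥ (Matrix.of fun r c =>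
        match r, c with
        | Sum.inl ⟨i, a⟩, Sum.inl ⟨j, c'⟩ =>
            if h : i = j then
              (β i • ((A i)ᵀ * A i) + Q i) a (Fin.cast (congrArg n h.symm) c')
            else 0
        | Sum.inl ⟨i, a⟩, Sum.inr s => (-(A i)ᵀ) a s
        | Sum.inr s, Sum.inl ⟨j, c'⟩ => (-(A j)) s c'
        | Sum.inr s, Sum.inr t =>
            ((∑ i, (β i)⁻¹) • (1 : Matrix (Fin m) (Fin m) ℝ)) s t : Matrix _ _ ℝ).mulVec ω
      = (∑ i : Fin p,
            (((Real.sqrt (β i))⁻¹ • (fun s => ω (Sum.inr s))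
                - Real.sqrt (β i) • (A i).mulVec (fun a => ω (Sum.inl ⟨i, a⟩))) ⬝ᵥ
             ((Real.sqrt (β i))⁻¹ • (fun s => ω (Sum.inr s))
                - Real.sqrt (β i) • (A i).mulVec (fun a => ω (Sum.inl ⟨i, a⟩)))))
          + ∑ i : Fin p,
              (fun a => ω (Sum.inl ⟨i, a⟩)) ⬝ᵥ (Q i).mulVec (fun a => ω (Sum.inl ⟨i, a⟩)) := by
    intro ω
    rw [decomp ω, ← Finset.sum_add_distrib]
    refine Finset.sum_congr rfl fun i _ => ?_
    rw [← key_scalar (A i) (β i) (hβ i) (fun a => ω (Sum.inl ⟨i, a⟩)) (fun s => ω (Sum.inr s))]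
    rw [Matrix.add_mulVec, dotProduct_add]
    ring
  refine ⟨Matrix.PosDef.of_dotProduct_mulVec_pos ?_ ?_, quad⟩
  · -- Hermitian
    have hB : ∀ (i : Fin p) (a c : Fin (n i)),
        (β i • ((A i)ᵀ * A i) + Q i) a c = (β i • ((A i)ᵀ * A i) + Q i) c a := by
      intro i a c
      have hQs : Q i a c = Q i c a := by
        have := (hQ i).1.apply a c
        simpa using this.symm
      simp only [Matrix.add_apply, Matrix.smul_apply, mul_apply, transpose_apply, smul_eq_mul, hQs]
      congr 1
      · congr 1
        exact Finset.sum_congr rfl fun s _ => mul_comm _ _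
    ext r c
    simp only [conjTranspose_apply, star_trivial]
    match r, c with
    | Sum.inl ⟨i, a⟩, Sum.inl ⟨j, c'⟩ =>
      simp only [of_apply]
      by_cases h : i = j
      · subst h
        rw [dif_pos rfl, dif_pos rfl]
        exact hB i c' a
      · rw [dif_neg (fun h' => h h'.symm), dif_neg h]
    | Sum.inl ⟨i, a⟩, Sum.inr s =>
      simp [transpose_apply]
    | Sum.inr s, Sum.inl ⟨j, c'⟩ =>
      simp [transpose_apply]
    | Sum.inr s, Sum.inr t =>
      simp only [of_apply, Matrix.smul_apply, one_apply, smul_eq_mul]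
      by_cases h : s = t
      · subst h; rfl
      · rw [if_neg (fun h' => h h'.symm), if_neg h]
  · -- positivity
    intro ω hω
    have hst : star ω = ω := star_trivial ω
    rw [hst]
    rw [show ((Matrix.of _ : Matrix _ _ ℝ) *ᵥ ω) = _ from rfl]
    rw [quad ω]
    set x : ∀ i, Fin (n i) → ℝ := fun i a => ω (Sum.inl ⟨i, a⟩) with hx
    have hQnn : ∀ i : Fin p, 0 ≤ (fun a => ω (Sum.inl ⟨i, a⟩)) ⬝ᵥ
        (Q i).mulVec (fun a => ω (Sum.inl ⟨i, a⟩)) := fun i => by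
      rcases eq_or_ne (fun a => ω (Sum.inl ⟨i, a⟩)) 0 with h | h
      · rw [h]; simp
      · have := (hQ i).dotProduct_mulVec_pos h
        simpa using this.le
    have hVnn : ∀ i : Fin p, 0 ≤ (((Real.sqrt (β i))⁻¹ • (fun s => ω (Sum.inr s))
                - Real.sqrt (β i) • (A i).mulVec (fun a => ω (Sum.inl ⟨i, a⟩))) ⬝ᵥ
             ((Real.sqrt (β i))⁻¹ • (fun s => ω (Sum.inr s))
                - Real.sqrt (β i) • (A i).mulVec (fun a => ω (Sum.inl ⟨i, a⟩)))) :=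
      fun i => dot_self_nonneg _
    by_cases hall : ∀ i : Fin p, (fun a => ω (Sum.inl ⟨i, a⟩)) = 0
    · -- all x_i are zero, so λ ≠ 0
      have hl : (fun s => ω (Sum.inr s)) ≠ 0 := by
        intro hl0
        apply hω
        funext r
        match r with
        | Sum.inl ⟨i, a⟩ => exact congrFun (hall i) a
        | Sum.inr s => exact congrFun hl0 s
      have i0 : Fin p := ⟨0, hp⟩
      have hpos : ∀ i : Fin p, 0 < (((Real.sqrt (β i))⁻¹ • (fun s => ω (Sum.inr s))
                - Real.sqrt (β i) • (A i).mulVec (fun a => ω (Sum.inl ⟨i, a⟩))) ⬝ᵥ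
             ((Real.sqrt (β i))⁻¹ • (fun s => ω (Sum.inr s))
                - Real.sqrt (β i) • (A i).mulVec (fun a => ω (Sum.inl ⟨i, a⟩)))) := by
        intro i
        refine dot_self_pos ?_
        rw [hall i]
        simp only [mulVec_zero, smul_zero, sub_zero]
        intro hv
        apply hl
        have hs : (Real.sqrt (β i))⁻¹ ≠ 0 := by
          have : 0 < Real.sqrt (β i) := Real.sqrt_pos.mpr (hβ i)
          positivity
        funext s
        have := congrFun hv s
        simp only [Pi.smul_apply, smul_eq_mul, Pi.zero_apply] at this
        exact mul_left_cancel₀ hs (by simpa using this)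
      have h1 : 0 < ∑ i : Fin p, (((Real.sqrt (β i))⁻¹ • (fun s => ω (Sum.inr s))
                - Real.sqrt (β i) • (A i).mulVec (fun a => ω (Sum.inl ⟨i, a⟩))) ⬝ᵥ
             ((Real.sqrt (β i))⁻¹ • (fun s => ω (Sum.inr s))
                - Real.sqrt (β i) • (A i).mulVec (fun a => ω (Sum.inl ⟨i, a⟩)))) :=
        Finset.sum_pos (fun i _ => hpos i) ⟨i0, Finset.mem_univ i0⟩
      have h2 : 0 ≤ ∑ i : Fin p, (fun a => ω (Sum.inl ⟨i, a⟩)) ⬝ᵥ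
          (Q i).mulVec (fun a => ω (Sum.inl ⟨i, a⟩)) :=
        Finset.sum_nonneg fun i _ => hQnn i
      linarith
    · push_neg at hall
      obtain ⟨i0, hi0⟩ := hall
      have h1 : 0 ≤ ∑ i : Fin p, (((Real.sqrt (β i))⁻¹ • (fun s => ω (Sum.inr s))
                - Real.sqrt (β i) • (A i).mulVec (fun a => ω (Sum.inl ⟨i, a⟩))) ⬝ᵥ
             ((Real.sqrt (β i))⁻¹ • (fun s => ω (Sum.inr s))
                - Real.sqrt (β i) • (A i).mulVec (fun a => ω (Sum.inl ⟨i, a⟩)))) :=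
        Finset.sum_nonneg fun i _ => hVnn i
      have h2 : 0 < ∑ i : Fin p, (fun a => ω (Sum.inl ⟨i, a⟩)) ⬝ᵥ
          (Q i).mulVec (fun a => ω (Sum.inl ⟨i, a⟩)) := by
        refine Finset.sum_pos' (fun i _ => hQnn i) ⟨i0, Finset.mem_univ i0, ?_⟩
        have := (hQ i0).dotProduct_mulVec_pos hi0
        simpa using this
      linarith
end

section
/- Suppose H is symmetric positive definite and (ωᵏ) ⊆ Ω is bounded with ‖ωᵏ - ω^{k+1}‖_H → 0, and every iterate satisfies θ(x) - θ(x^{k+1}) + (ω - ω^{k+1})ᵀF(ω^{k+1}) ≥ (ω - ω^{k+1})ᵀH(ωᵏ - ω^{k+1}) for all ω ∈ Ω, with θ continuous convex and F continuous affine. Then any cluster point ω̄ of (ωᵏ) satisfies the variational inequality θ(x) - θ(x̄) + (ω - ω̄)ᵀF(ω̄) ≥ 0 for all ω ∈ Ω, i.e., ω̄ ∈ Ω*. -/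
open Matrix Filter Topology

lemma dotTendsto {ι : Type*} [Fintype ι] {f g : ℕ → ι → ℝ} {a b : ι → ℝ}
    (hf : Tendsto f atTop (𝓝 a)) (hg : Tendsto g atTop (𝓝 b)) :
    Tendsto (fun j => f j ⬝ᵥ g j) atTop (𝓝 (a ⬝ᵥ b)) := by
  simp only [dotProduct]
  exact tendsto_finset_sum _ fun i _ =>
    ((((continuous_apply i).tendsto a).comp hf).mul (((continuous_apply i).tendsto b).comp hg))

lemma coercive {ι : Type*} [Fintype ι] [DecidableEq ι] {H : Matrix ι ι ℝ} (hH : H.PosDef) :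
    ∃ c > 0, ∀ v : ι → ℝ, c * ‖v‖^2 ≤ v ⬝ᵥ H.mulVec v := by
  have hq : Continuous fun v : ι → ℝ => v ⬝ᵥ H.mulVec v := by
    simp only [dotProduct, Matrix.mulVec]
    exact continuous_finset_sum _ fun i _ =>
      (continuous_apply i).mul
        (continuous_finset_sum _ fun j _ => continuous_const.mul (continuous_apply j))
  rcases isEmpty_or_nonempty ι with he | hne
  · refine ⟨1, one_pos, fun v => ?_⟩
    have hv : v = 0 := Subsingleton.elim v 0
    simp [hv, dotProduct]
  · have hsc : IsCompact (Metric.sphere (0 : ι → ℝ) 1) := isCompact_sphere 0 1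
    have hsn : (Metric.sphere (0 : ι → ℝ) 1).Nonempty :=
      NormedSpace.sphere_nonempty.mpr zero_le_one
    obtain ⟨u, hu, hmin⟩ := hsc.exists_isMinOn hsn hq.continuousOn
    have hun : ‖u‖ = 1 := by simpa using hu
    have hune : u ≠ 0 := by intro h; rw [h] at hun; simp at hun
    have hc : 0 < u ⬝ᵥ H.mulVec u := by simpa using hH.dotProduct_mulVec_pos hune
    refine ⟨u ⬝ᵥ H.mulVec u, hc, fun v => ?_⟩
    rcases eq_or_ne v 0 with rfl | hv
    · simp
    · have ha : (0:ℝ) < ‖v‖ := norm_pos_iff.mpr hv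
      have hu' : (‖v‖⁻¹ • v) ∈ Metric.sphere (0 : ι → ℝ) 1 := by
        simp [norm_smul, abs_of_pos (inv_pos.mpr ha), inv_mul_cancel₀ ha.ne']
      have hle : (u ⬝ᵥ H.mulVec u) ≤ (‖v‖⁻¹ • v) ⬝ᵥ H.mulVec (‖v‖⁻¹ • v) := hmin hu'
      have heq : (‖v‖⁻¹ • v) ⬝ᵥ H.mulVec (‖v‖⁻¹ • v) = ‖v‖⁻¹ * (‖v‖⁻¹ * (v ⬝ᵥ H.mulVec v)) := by
        rw [Matrix.mulVec_smul, smul_dotProduct, dotProduct_smul]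
        simp [smul_eq_mul]
      rw [heq] at hle
      have h2 := mul_le_mul_of_nonneg_right hle (mul_pos ha ha).le
      have h3 : (‖v‖⁻¹ * (‖v‖⁻¹ * (v ⬝ᵥ H.mulVec v))) * (‖v‖ * ‖v‖) = v ⬝ᵥ H.mulVec v := by
        field_simp
      rw [h3] at h2
      calc u ⬝ᵥ H.mulVec u * ‖v‖ ^ 2 = u ⬝ᵥ H.mulVec u * (‖v‖ * ‖v‖) := by ring
        _ ≤ v ⬝ᵥ H.mulVec v := h2

theorem stmt_18 {m n : ℕ} (θ : (Fin n → ℝ) → ℝ)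
    (hθc : Continuous θ) (hθ : ConvexOn ℝ Set.univ θ)
    (Ω : Set (Fin n ⊕ Fin m → ℝ)) (hΩc : IsClosed Ω) (hΩv : Convex ℝ Ω)
    (A : Matrix (Fin m) (Fin n) ℝ) (b : Fin m → ℝ)
    (F : (Fin n ⊕ Fin m → ℝ) → (Fin n ⊕ Fin m → ℝ))
    (hF : ∀ w, F w = Sum.elim (-(Aᵀ.mulVec (w ∘ Sum.inr))) (A.mulVec (w ∘ Sum.inl) - b))
    (H : Matrix (Fin n ⊕ Fin m) (Fin n ⊕ Fin m) ℝ) (hH : H.PosDef)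
    (ω : ℕ → (Fin n ⊕ Fin m → ℝ)) (hωΩ : ∀ k, ω k ∈ Ω)
    (hbdd : ∃ C : ℝ, ∀ k, ‖ω k‖ ≤ C)
    (hdiff : Tendsto (fun k => (ω k - ω (k+1)) ⬝ᵥ H.mulVec (ω k - ω (k+1))) atTop (𝓝 0))
    (hvi : ∀ k : ℕ, ∀ w ∈ Ω,
      θ (w ∘ Sum.inl) - θ ((ω (k+1)) ∘ Sum.inl) + (w - ω (k+1)) ⬝ᵥ F (ω (k+1))
        ≥ (w - ω (k+1)) ⬝ᵥ H.mulVec (ω k - ω (k+1)))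
    (ωbar : Fin n ⊕ Fin m → ℝ)
    (φ : ℕ → ℕ) (hφ : StrictMono φ) (hconv : Tendsto (ω ∘ φ) atTop (𝓝 ωbar)) :
    ωbar ∈ Ω ∧
    ∀ w ∈ Ω, θ (w ∘ Sum.inl) - θ (ωbar ∘ Sum.inl) + (w - ωbar) ⬝ᵥ F ωbar ≥ 0 := by
  -- coercivity constant
  obtain ⟨c, hc, hcoer⟩ := coercive hH
  -- difference along subsequence
  set v : ℕ → (Fin n ⊕ Fin m → ℝ) := fun j => ω (φ j) - ω (φ j + 1) with hv
  have hqv : Tendsto (fun j => v j ⬝ᵥ H.mulVec (v j)) atTop (𝓝 0) :=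
    hdiff.comp hφ.tendsto_atTop
  have hsq : Tendsto (fun j => ‖v j‖ ^ 2) atTop (𝓝 0) := by
    apply squeeze_zero (fun j => by positivity) (g := fun j => (v j ⬝ᵥ H.mulVec (v j)) / c)
    · intro j
      rw [le_div_iff₀ hc]
      have := hcoer (v j)
      linarith
    · simpa using hqv.div_const c
  have hnv : Tendsto (fun j => ‖v j‖) atTop (𝓝 0) := by
    have h := (Real.continuous_sqrt.tendsto 0).comp hsq
    simp only [Function.comp_def, Real.sqrt_zero] at h
    convert h using 2 with j
    rw [Real.sqrt_sq (norm_nonneg _)]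
  have hv0 : Tendsto v atTop (𝓝 0) := tendsto_zero_iff_norm_tendsto_zero.mpr hnv
  have hu : Tendsto (fun j => ω (φ j + 1)) atTop (𝓝 ωbar) := by
    have h := hconv.sub hv0
    simp only [Function.comp_def, hv, sub_sub_cancel, sub_zero] at h
    exact h
  -- continuity of F
  have h1 : Continuous fun w : Fin n ⊕ Fin m → ℝ => Aᵀ.mulVec (w ∘ Sum.inr) :=
    ((Aᵀ.mulVecLin).comp (LinearMap.funLeft ℝ ℝ Sum.inr)).continuous_of_finiteDimensional
  have h2 : Continuous fun w : Fin n ⊕ Fin m → ℝ => A.mulVec (w ∘ Sum.inl) :=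
    ((A.mulVecLin).comp (LinearMap.funLeft ℝ ℝ Sum.inl)).continuous_of_finiteDimensional
  have hFc : Continuous F := by
    have hF' : F = fun w => Sum.elim (-(Aᵀ.mulVec (w ∘ Sum.inr))) (A.mulVec (w ∘ Sum.inl) - b) :=
      funext hF
    rw [hF']
    apply continuous_pi
    rintro (i | i)
    · exact ((continuous_apply i).comp h1).neg
    · exact (((continuous_apply i).comp h2).sub continuous_const)
  have hHc : Continuous fun x : Fin n ⊕ Fin m → ℝ => H.mulVec x :=
    (H.mulVecLin).continuous_of_finiteDimensional
  constructor
  · exact hΩc.mem_of_tendsto hconv (Eventually.of_forall fun j => hωΩ (φ j))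
  · intro w hw
    have hR : Tendsto (fun j => (w - ω (φ j + 1)) ⬝ᵥ H.mulVec (v j)) atTop (𝓝 0) := by
      have := dotTendsto (f := fun j => w - ω (φ j + 1)) (tendsto_const_nhds.sub hu)
        ((hHc.tendsto 0).comp hv0)
      simpa using this
    have hL : Tendsto
        (fun j => θ (w ∘ Sum.inl) - θ (ω (φ j + 1) ∘ Sum.inl)
            + (w - ω (φ j + 1)) ⬝ᵥ F (ω (φ j + 1))) atTop
        (𝓝 (θ (w ∘ Sum.inl) - θ (ωbar ∘ Sum.inl) + (w - ωbar) ⬝ᵥ F ωbar)) := by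
      have hres : Tendsto (fun j => ω (φ j + 1) ∘ Sum.inl) atTop (𝓝 (ωbar ∘ Sum.inl)) := by
        apply tendsto_pi_nhds.mpr
        intro i
        exact ((continuous_apply (Sum.inl i)).tendsto ωbar).comp hu
      exact (tendsto_const_nhds.sub ((hθc.tendsto _).comp hres)).add
        (dotTendsto (tendsto_const_nhds.sub hu) ((hFc.tendsto _).comp hu))
    exact le_of_tendsto_of_tendsto' hR hL (fun j => hvi (φ j) w hw)
end
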